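/- arXiv:1811.05507 — 2 statements merged into one kernel-verified Lean document; each statement's English description precedes it below -/
import Mathlib

section
/- Large sieve inequality for roots of ν² + 1 ≡ 0: Let h ≥ 1 be an integer, X ≥ 1 a real number, N ≥ 1 an integer, and α₁, …, α_N ∈ ℂ. Then ∑_{X < d ≤ 2X, gcd(d,h)=1} ∑_{ν (mod d), ν² + 1 ≡ 0 (mod d)} | ∑_{n ≤ N} α_n·e(ν·n·h̄_d / d) |² ≤ 400·(hX + N)·∑_{n ≤ N} |α_n|², where the middle sum runs over the residues ν modulo d satisfying ν² + 1 ≡ 0 (mod d) and h̄_d denotes the multiplicative inverse of h modulo d. -/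
/-!
Write `x_{d,ν}` for the fractional part of `ν h̄_d / d`, so that the inner sums are the values
of `S(t) = ∑ α_n e(nt)` at these points. Gallagher's inequality
`|f(b)|² ≤ δ⁻¹ ∫_{b-δ}^b |f|² + ∫_{b-δ}^b |(|f|²)'|` together with Parseval's identity shows that
any `δ`-separated points `x_i ∈ [0, 1)` satisfy `∑ |S(x_i)|² ≤ (2/δ + 8πN) ∑ |α_n|²`.
Since `h x_{d,ν} ≡ ν/d (mod 1)`, it remains to see that the fractions `ν/d` with
`ν² ≡ -1 (mod d)` and `X < d ≤ 2X` are `1/(5X)`-separated modulo 1: for two of them and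
`q = ν d' - (ν' + M d') d`, the integer `q² + d² + d'²` is a multiple of `d d'` that is at least
`2 d d'`, and smaller than `3 d d'` when `|ν/d - ν'/d' - M| < 1/(5X)`; so it equals `2 d d'`,
which forces `q = 0` and `d = d'`.
-/

open Finset

/-- `e(t) = exp(2πit)`. -/
noncomputable def eAdd (t : ℝ) : ℂ := Complex.exp (2 * Real.pi * Complex.I * t)

open Complex ComplexConjugate MeasureTheory

lemma le_integral_div_add_abs_deriv {f f' : ℝ → ℝ} (hf : ∀ t, HasDerivAt f (f' t) t)
    (hf' : Continuous f') {a b : ℝ} (hab : a < b) :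
    f b ≤ ∫ t in a..b, (f t / (b - a) + |f' t|) := by
  have hfc : Continuous f := continuous_iff_continuousAt.2 fun t => (hf t).continuousAt
  set C := ∫ t in a..b, |f' t|
  have hpt : ∀ y ∈ Set.Icc a b, f b ≤ f y + C := by
    intro y hy
    have hftc : ∫ t in y..b, f' t = f b - f y :=
      intervalIntegral.integral_eq_sub_of_hasDerivAt (fun t _ => hf t) (hf'.intervalIntegrable _ _)
    have hmono : ∫ t in y..b, |f' t| ≤ C :=
      intervalIntegral.integral_mono_interval hy.1 hy.2 le_rfl
        (Filter.Eventually.of_forall fun t => abs_nonneg _) (hf'.abs.intervalIntegrable _ _)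
    linarith [le_abs_self (∫ t in y..b, f' t),
      intervalIntegral.abs_integral_le_integral_abs (f := f') (μ := volume) hy.2]
  have havg := intervalIntegral.integral_mono_on (μ := volume) (g := fun y => f y + C) hab.le
    intervalIntegrable_const ((hfc.add continuous_const).intervalIntegrable a b) hpt
  rw [intervalIntegral.integral_const, intervalIntegral.integral_add (hfc.intervalIntegrable _ _)
    intervalIntegrable_const, intervalIntegral.integral_const, smul_eq_mul, smul_eq_mul] at havg
  rw [intervalIntegral.integral_add ((hfc.div_const _).intervalIntegrable _ _)
    (hf'.abs.intervalIntegrable _ _), intervalIntegral.integral_div]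
  have hba : 0 < b - a := sub_pos.2 hab
  rw [div_add' _ _ _ hba.ne', le_div_iff₀ hba]
  linarith

lemma disjoint_Ioc_sub_of_le_abs_sub {a b δ : ℝ} (h : δ ≤ |a - b|) :
    Disjoint (Set.Ioc (a - δ) a) (Set.Ioc (b - δ) b) := by
  rw [Set.Ioc_disjoint_Ioc]
  rcases le_abs'.1 h with h | h
  · exact (min_le_left _ _).trans (by linarith [le_max_right (a - δ) (b - δ)])
  · exact (min_le_right _ _).trans (by linarith [le_max_left (a - δ) (b - δ)])

lemma sum_integral_le_two_mul_integral_of_separated {ι : Type*} {P : Finset ι} {x : ι → ℝ}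
    (hx : ∀ i ∈ P, x i ∈ Set.Ico 0 1) {δ : ℝ} (hδ : 0 < δ) (hδ1 : δ ≤ 1)
    (hsep : (P : Set ι).Pairwise fun i j => δ ≤ |x i - x j|) {G : ℝ → ℝ} (hG : Continuous G)
    (hG0 : 0 ≤ G) (hper : Function.Periodic G 1) :
    ∑ i ∈ P, ∫ t in x i - δ..x i, G t ≤ 2 * ∫ t in (0 : ℝ)..1, G t := by
  have hsub : ∀ i ∈ P, Set.Ioc (x i - δ) (x i) ⊆ Set.Ioc (-1) 1 := fun i hi =>
    Set.Ioc_subset_Ioc (by linarith [(hx i hi).1]) (hx i hi).2.le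
  have hint : IntegrableOn G (Set.Ioc (-1) 1) := (hG.intervalIntegrable (-1) 1).1
  calc ∑ i ∈ P, ∫ t in x i - δ..x i, G t
      = ∫ t in ⋃ i ∈ P, Set.Ioc (x i - δ) (x i), G t := by
        rw [integral_biUnion_finset (s := fun i => Set.Ioc (x i - δ) (x i)) P
          (fun i _ => measurableSet_Ioc)
          (hsep.mono' fun i j => disjoint_Ioc_sub_of_le_abs_sub)
          fun i hi => hint.mono_set (hsub i hi)]
        exact sum_congr rfl fun i _ => intervalIntegral.integral_of_le (by linarith)
    _ ≤ ∫ t in Set.Ioc (-1) 1, G t :=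
        setIntegral_mono_set hint (Filter.Eventually.of_forall hG0)
          (Set.iUnion₂_subset hsub).eventuallyLE
    _ = 2 * ∫ t in (0 : ℝ)..1, G t := by
        rw [← intervalIntegral.integral_of_le (by norm_num),
          ← intervalIntegral.integral_add_adjacent_intervals (b := 0)
            (hG.intervalIntegrable _ _) (hG.intervalIntegrable _ _)]
        have := hper.intervalIntegral_add_eq (-1) 0
        norm_num at this
        rw [this]
        ring

lemma sum_le_of_separated_of_hasDerivAt {ι : Type*} {P : Finset ι} {x : ι → ℝ}
    (hx : ∀ i ∈ P, x i ∈ Set.Ico 0 1) {δ : ℝ} (hδ : 0 < δ) (hδ1 : δ ≤ 1)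
    (hsep : (P : Set ι).Pairwise fun i j => δ ≤ |x i - x j|) {f f' : ℝ → ℝ} (hf0 : 0 ≤ f)
    (hf : ∀ t, HasDerivAt f (f' t) t) (hf' : Continuous f') (hfper : Function.Periodic f 1)
    (hf'per : Function.Periodic f' 1) :
    ∑ i ∈ P, f (x i) ≤ 2 * ((∫ t in (0 : ℝ)..1, f t) / δ + ∫ t in (0 : ℝ)..1, |f' t|) := by
  have hfc : Continuous f := continuous_iff_continuousAt.2 fun t => (hf t).continuousAt
  calc ∑ i ∈ P, f (x i) ≤ ∑ i ∈ P, ∫ t in x i - δ..x i, (f t / δ + |f' t|) :=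
        sum_le_sum fun i _ => by
          simpa using le_integral_div_add_abs_deriv hf hf' (sub_lt_self (x i) hδ)
    _ ≤ 2 * ∫ t in (0 : ℝ)..1, (f t / δ + |f' t|) :=
        sum_integral_le_two_mul_integral_of_separated hx hδ hδ1 hsep (by fun_prop)
          (fun t => add_nonneg (div_nonneg (hf0 t) hδ.le) (abs_nonneg _))
          fun t => by simp only [hfper t, hf'per t]
    _ = 2 * ((∫ t in (0 : ℝ)..1, f t) / δ + ∫ t in (0 : ℝ)..1, |f' t|) := by
        rw [intervalIntegral.integral_add ((hfc.div_const _).intervalIntegrable _ _)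
          (hf'.abs.intervalIntegrable _ _), intervalIntegral.integral_div]

lemma eAdd_add (s t : ℝ) : eAdd (s + t) = eAdd s * eAdd t := by
  simp only [eAdd, ← Complex.exp_add]
  push_cast
  ring_nf

lemma eAdd_intCast (k : ℤ) : eAdd k = 1 := by
  rw [eAdd, ← Complex.exp_int_mul_two_pi_mul_I k]
  push_cast
  ring_nf

lemma eAdd_add_intCast (t : ℝ) (k : ℤ) : eAdd (t + k) = eAdd t := by
  rw [eAdd_add, eAdd_intCast, mul_one]

lemma eAdd_natCast_mul_fract (n : ℕ) (t : ℝ) : eAdd (n * Int.fract t) = eAdd (n * t) := by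
  rw [← eAdd_add_intCast _ (n * ⌊t⌋), Int.fract]
  push_cast
  ring_nf

lemma eAdd_mul_conj_eAdd (s t : ℝ) : eAdd s * conj (eAdd t) = eAdd (s - t) := by
  simp only [eAdd, ← Complex.exp_conj, ← Complex.exp_add, map_mul, conj_ofReal, conj_I,
    map_ofNat]
  push_cast
  ring_nf

@[fun_prop]
lemma continuous_eAdd : Continuous eAdd := by
  unfold eAdd
  fun_prop

lemma hasDerivAt_eAdd_mul (c t : ℝ) :
    HasDerivAt (fun t => eAdd (c * t)) (2 * Real.pi * I * c * eAdd (c * t)) t := by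
  have := ((hasDerivAt_id (t : ℂ)).const_mul (2 * Real.pi * I * c)).cexp.comp_ofReal
  simpa [eAdd, mul_assoc, mul_comm, mul_left_comm] using this

lemma integral_eAdd_intCast_mul (k : ℤ) :
    ∫ t in (0 : ℝ)..1, eAdd (k * t) = if k = 0 then 1 else 0 := by
  split_ifs with hk
  · simp [hk, eAdd]
  · have hc : (2 * Real.pi * I * k : ℂ) ≠ 0 := by simp [Real.pi_ne_zero, I_ne_zero, hk]
    have h1 : eAdd (k * 1) = 1 := by simpa using eAdd_intCast k
    simp only [eAdd] at h1 ⊢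
    push_cast at h1 ⊢
    simp_rw [← mul_assoc]
    rw [integral_exp_mul_complex hc]
    simp_all

noncomputable def expSum (s : Finset ℕ) (β : ℕ → ℂ) (t : ℝ) : ℂ :=
  ∑ n ∈ s, β n * eAdd (n * t)

@[fun_prop]
lemma continuous_expSum (s : Finset ℕ) (β : ℕ → ℂ) : Continuous (expSum s β) := by
  unfold expSum
  fun_prop

lemma expSum_periodic (s : Finset ℕ) (β : ℕ → ℂ) : Function.Periodic (expSum s β) 1 := by
  intro t
  refine sum_congr rfl fun n _ => ?_
  rw [mul_add, mul_one, ← eAdd_add_intCast (n * t) n, Int.cast_natCast]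

lemma hasDerivAt_expSum (s : Finset ℕ) (β : ℕ → ℂ) (t : ℝ) :
    HasDerivAt (expSum s β) (expSum s (fun n => 2 * Real.pi * I * n * β n) t) t := by
  refine (HasDerivAt.fun_sum (u := s) fun n _ =>
    (hasDerivAt_eAdd_mul n t).const_mul (β n)).congr_deriv ?_
  exact sum_congr rfl fun n _ => by push_cast; ring

lemma integral_norm_sq_expSum (s : Finset ℕ) (β : ℕ → ℂ) :
    ∫ t in (0 : ℝ)..1, ‖expSum s β t‖ ^ 2 = ∑ n ∈ s, ‖β n‖ ^ 2 := by
  set c : ℕ → ℕ → ℝ → ℂ := fun n m t => β n * conj (β m) * eAdd (((n : ℤ) - m : ℤ) * t)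
  have hexpand (t : ℝ) : ((‖expSum s β t‖ ^ 2 : ℝ) : ℂ) = ∑ n ∈ s, ∑ m ∈ s, c n m t := by
    rw [ofReal_pow, ← mul_conj', expSum, map_sum, sum_mul_sum]
    refine sum_congr rfl fun n _ => sum_congr rfl fun m _ => ?_
    rw [map_mul, mul_mul_mul_comm, eAdd_mul_conj_eAdd]
    simp only [c]
    push_cast
    ring_nf
  have hc (n m : ℕ) : Continuous (c n m) := by fun_prop
  apply Complex.ofReal_injective
  rw [← intervalIntegral.integral_ofReal]
  simp_rw [hexpand]
  rw [intervalIntegral.integral_finsetSum fun n _ =>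
    (continuous_finsetSum s fun m _ => hc n m).intervalIntegrable 0 1]
  push_cast
  refine sum_congr rfl fun n hn => ?_
  rw [intervalIntegral.integral_finsetSum fun m _ => (hc n m).intervalIntegrable 0 1]
  simp_rw [c, intervalIntegral.integral_const_mul, integral_eAdd_intCast_mul, sub_eq_zero,
    Nat.cast_inj, mul_ite, mul_one, mul_zero, sum_ite_eq, if_pos hn, mul_conj']

lemma integral_abs_deriv_norm_sq_expSum_le {s : Finset ℕ} {T : ℝ} (hT : 0 < T)
    (hs : ∀ n ∈ s, (n : ℝ) ≤ T) (β : ℕ → ℂ) :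
    ∫ t in (0 : ℝ)..1,
        |2 * inner ℝ (expSum s β t) (expSum s (fun n => 2 * Real.pi * I * n * β n) t)|
      ≤ 4 * Real.pi * T * ∑ n ∈ s, ‖β n‖ ^ 2 := by
  set β' : ℕ → ℂ := fun n => 2 * Real.pi * I * n * β n
  set c := 2 * Real.pi * T
  have hc : 0 < c := by positivity
  have hpt (t : ℝ) : |2 * inner ℝ (expSum s β t) (expSum s β' t)|
      ≤ c * ‖expSum s β t‖ ^ 2 + c⁻¹ * ‖expSum s β' t‖ ^ 2 := by
    rw [abs_mul, abs_two]
    calc 2 * |inner ℝ (expSum s β t) (expSum s β' t)|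
        ≤ 2 * ‖expSum s β t‖ * ‖expSum s β' t‖ := by
          rw [mul_assoc]; gcongr; exact abs_real_inner_le_norm _ _
      _ ≤ _ := two_mul_le_add_mul_sq hc
  have hβ' : ∑ n ∈ s, ‖β' n‖ ^ 2 ≤ c ^ 2 * ∑ n ∈ s, ‖β n‖ ^ 2 := by
    rw [mul_sum]
    refine sum_le_sum fun n hn => ?_
    have hn : ‖2 * Real.pi * I * n‖ ≤ c := by
      simpa [c, abs_of_pos Real.pi_pos] using
        mul_le_mul_of_nonneg_left (hs n hn) (by positivity : (0 : ℝ) ≤ 2 * Real.pi)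
    rw [norm_mul, mul_pow]
    gcongr
  calc _ ≤ ∫ t in (0 : ℝ)..1, (c * ‖expSum s β t‖ ^ 2 + c⁻¹ * ‖expSum s β' t‖ ^ 2) :=
        intervalIntegral.integral_mono_on zero_le_one
          (Continuous.intervalIntegrable (by fun_prop) _ _)
          (Continuous.intervalIntegrable (by fun_prop) _ _) fun t _ => hpt t
    _ = c * ∑ n ∈ s, ‖β n‖ ^ 2 + c⁻¹ * ∑ n ∈ s, ‖β' n‖ ^ 2 := by
        rw [intervalIntegral.integral_add (Continuous.intervalIntegrable (by fun_prop) _ _)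
          (Continuous.intervalIntegrable (by fun_prop) _ _),
          intervalIntegral.integral_const_mul, intervalIntegral.integral_const_mul,
          integral_norm_sq_expSum, integral_norm_sq_expSum]
    _ ≤ c * ∑ n ∈ s, ‖β n‖ ^ 2 + c⁻¹ * (c ^ 2 * ∑ n ∈ s, ‖β n‖ ^ 2) := by gcongr
    _ = 4 * Real.pi * T * ∑ n ∈ s, ‖β n‖ ^ 2 := by
        field_simp
        ring

theorem sum_norm_sq_expSum_le_of_separated {ι : Type*} {P : Finset ι} {x : ι → ℝ}
    (hx : ∀ i ∈ P, x i ∈ Set.Ico 0 1) {δ : ℝ} (hδ : 0 < δ) (hδ1 : δ ≤ 1)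
    (hsep : (P : Set ι).Pairwise fun i j => δ ≤ |x i - x j|) {s : Finset ℕ} {T : ℝ}
    (hT : 0 < T) (hs : ∀ n ∈ s, (n : ℝ) ≤ T) (β : ℕ → ℂ) :
    ∑ i ∈ P, ‖expSum s β (x i)‖ ^ 2 ≤ (2 / δ + 8 * Real.pi * T) * ∑ n ∈ s, ‖β n‖ ^ 2 := by
  set β' : ℕ → ℂ := fun n => 2 * Real.pi * I * n * β n
  have hsieve := sum_le_of_separated_of_hasDerivAt hx hδ hδ1 hsep
    (f := fun t => ‖expSum s β t‖ ^ 2)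
    (fun t => by positivity) (fun t => (hasDerivAt_expSum s β t).norm_sq)
    (by fun_prop)
    (fun t => by simp only [expSum_periodic _ _ t]) (fun t => by simp only [expSum_periodic _ _ t])
  rw [integral_norm_sq_expSum] at hsieve
  have hderiv := integral_abs_deriv_norm_sq_expSum_le hT hs β
  calc _ ≤ _ := hsieve
    _ ≤ 2 * ((∑ n ∈ s, ‖β n‖ ^ 2) / δ + 4 * Real.pi * T * ∑ n ∈ s, ‖β n‖ ^ 2) := by gcongr
    _ = _ := by ring

lemma dvd_sq_add_sq_add_sq_of_dvd_sq_add_one {d d' ν w : ℤ} (h : d ∣ ν ^ 2 + 1)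
    (h' : d' ∣ w ^ 2 + 1) : d * d' ∣ (ν * d' - w * d) ^ 2 + d ^ 2 + d' ^ 2 := by
  obtain ⟨c, hc⟩ := h
  obtain ⟨c', hc'⟩ := h'
  exact ⟨c * d' + c' * d - 2 * ν * w, by linear_combination d' ^ 2 * hc + d ^ 2 * hc'⟩

lemma eq_of_dvd_sq_add_sq_add_sq {a b q : ℤ} (ha : 0 < a) (hb : 0 < b)
    (hdvd : a * b ∣ q ^ 2 + a ^ 2 + b ^ 2) (hlt : q ^ 2 + a ^ 2 + b ^ 2 < 3 * (a * b)) :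
    q = 0 ∧ a = b := by
  obtain ⟨m, hm⟩ := hdvd
  have hab : 0 < a * b := mul_pos ha hb
  have hm2 : 2 ≤ m := by
    refine le_of_mul_le_mul_left ?_ hab
    nlinarith [sq_nonneg q, sq_nonneg (a - b)]
  have hm3 : m < 3 := lt_of_mul_lt_mul_left (by linarith) hab.le
  obtain rfl : m = 2 := by omega
  constructor <;> nlinarith [sq_nonneg q, sq_nonneg (a - b)]

lemma sq_add_sq_add_sq_lt {X a b q : ℝ} (ha : X < a) (ha2 : a ≤ 2 * X) (hb : X < b)
    (hb2 : b ≤ 2 * X) (hq : |q| < a * b / (5 * X)) : q ^ 2 + a ^ 2 + b ^ 2 < 3 * (a * b) := by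
  have hX : 0 < X := by linarith
  have hab : 0 < a * b := by nlinarith
  have hq2 : q ^ 2 < 4 / 25 * (a * b) := by
    have h1 : q ^ 2 < (a * b / (5 * X)) ^ 2 := by
      rw [← sq_abs]; exact pow_lt_pow_left₀ hq (abs_nonneg q) two_ne_zero
    have h2 : (a * b / (5 * X)) ^ 2 ≤ 4 / 25 * (a * b) := by
      have : a * b ≤ 4 * X ^ 2 := by nlinarith
      rw [div_pow, div_le_iff₀ (by positivity)]
      nlinarith [mul_le_mul_of_nonneg_left this hab.le]
    linarith
  nlinarith [mul_nonneg (sub_nonneg.2 (show b ≤ 2 * a by linarith))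
    (sub_nonneg.2 (show a ≤ 2 * b by linarith))]

lemma eq_of_abs_div_sub_div_sub_intCast_lt {X : ℝ} {d d' ν ν' : ℕ} {M : ℤ} (hd : X < d)
    (hd2 : (d : ℝ) ≤ 2 * X) (hd' : X < d') (hd'2 : (d' : ℝ) ≤ 2 * X) (hν : ν < d) (hν' : ν' < d')
    (hr : d ∣ ν ^ 2 + 1) (hr' : d' ∣ ν' ^ 2 + 1)
    (hclose : |(ν : ℝ) / d - ν' / d' - M| < 1 / (5 * X)) : d = d' ∧ ν = ν' := by
  have hX : 0 < X := by linarith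
  have hd0 : (0 : ℝ) < d := by linarith
  have hd'0 : (0 : ℝ) < d' := by linarith
  set w : ℤ := ν' + M * d'
  set q : ℤ := ν * d' - w * d
  have hdvd : (d : ℤ) * d' ∣ q ^ 2 + (d : ℤ) ^ 2 + (d' : ℤ) ^ 2 := by
    refine dvd_sq_add_sq_add_sq_of_dvd_sq_add_one (by exact_mod_cast hr) ?_
    obtain ⟨c, hc⟩ := Int.natCast_dvd_natCast.2 hr'
    exact ⟨c + 2 * M * ν' + M ^ 2 * d', by push_cast at hc; linear_combination hc⟩
  have hq : |(q : ℝ)| < d * d' / (5 * X) := by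
    have : (q : ℝ) = d * d' * ((ν : ℝ) / d - ν' / d' - M) := by
      simp only [q, w]; push_cast; field_simp; ring
    rw [this, abs_mul, abs_of_pos (by positivity), mul_div_assoc, ← mul_one_div (d' : ℝ),
      ← mul_assoc]
    exact mul_lt_mul_of_pos_left hclose (by positivity)
  obtain ⟨hq0, hdd⟩ := eq_of_dvd_sq_add_sq_add_sq (by exact_mod_cast hd0) (by exact_mod_cast hd'0)
    hdvd (by exact_mod_cast sq_add_sq_add_sq_lt hd hd2 hd' hd'2 hq)
  obtain rfl : d = d' := by exact_mod_cast hdd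
  have hM : (ν : ℤ) - ν' = M * d := by
    have : ((ν : ℤ) - ν' - M * d) * d = 0 := by linear_combination hq0
    linarith [(mul_eq_zero.1 this).resolve_right (by exact_mod_cast hd0.ne')]
  obtain rfl : M = 0 := by nlinarith
  exact ⟨rfl, by omega⟩

/-- `{ν h̄_d / d}`, the point at which the inner sum of `large_sieve_for_roots` evaluates
`expSum`. -/
noncomputable def fractMulInv (h d ν : ℕ) : ℝ :=
  Int.fract (((ν * ((h : ZMod d)⁻¹).val : ℕ) : ℝ) / d)

lemma exists_natCast_mul_fractMulInv_eq {h d : ℕ} [NeZero d] (hhd : h.Coprime d) (ν : ℕ) :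
    ∃ k : ℤ, h * fractMulInv h d ν = ν / d + k := by
  obtain ⟨j, hj⟩ : (d : ℤ) ∣ h * ((h : ZMod d)⁻¹).val - 1 := by
    rw [← ZMod.intCast_zmod_eq_zero_iff_dvd]
    push_cast
    rw [ZMod.natCast_zmod_val, ZMod.coe_mul_inv_eq_one h hhd, sub_self]
  refine ⟨ν * j - h * ⌊((ν * ((h : ZMod d)⁻¹).val : ℕ) : ℝ) / d⌋, ?_⟩
  have hd : (d : ℝ) ≠ 0 := NeZero.ne _
  have hj' : (h : ℝ) * ((h : ZMod d)⁻¹).val = 1 + d * j := by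
    rw [← sub_eq_iff_eq_add']; exact_mod_cast hj
  rw [fractMulInv, Int.fract]
  push_cast
  field_simp
  linear_combination ν * hj'

lemma le_abs_fractMulInv_sub {h : ℕ} (hh : 0 < h) {X : ℝ} {d d' ν ν' : ℕ} (hd : X < d)
    (hd2 : (d : ℝ) ≤ 2 * X) (hd' : X < d') (hd'2 : (d' : ℝ) ≤ 2 * X) (hhd : h.Coprime d)
    (hhd' : h.Coprime d') (hν : ν < d) (hν' : ν' < d') (hr : d ∣ ν ^ 2 + 1)
    (hr' : d' ∣ ν' ^ 2 + 1) (hne : ¬(d = d' ∧ ν = ν')) :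
    1 / (5 * h * X) ≤ |fractMulInv h d ν - fractMulInv h d' ν'| := by
  have : NeZero d := ⟨by rintro rfl; omega⟩
  have : NeZero d' := ⟨by rintro rfl; omega⟩
  obtain ⟨k, hk⟩ := exists_natCast_mul_fractMulInv_eq hhd ν
  obtain ⟨k', hk'⟩ := exists_natCast_mul_fractMulInv_eq hhd' ν'
  by_contra! hlt
  have hh' : (0 : ℝ) < h := by exact_mod_cast hh
  have hclose : |(ν : ℝ) / d - ν' / d' - (k' - k : ℤ)| < 1 / (5 * X) :=
    calc |(ν : ℝ) / d - ν' / d' - (k' - k : ℤ)|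
        = h * |fractMulInv h d ν - fractMulInv h d' ν'| := by
          rw [← abs_of_pos hh', ← abs_mul, mul_sub, hk, hk']; push_cast; ring_nf
      _ < h * (1 / (5 * h * X)) := by gcongr
      _ = 1 / (5 * X) := by field_simp
  exact hne (eq_of_abs_div_sub_div_sub_intCast_lt hd hd2 hd' hd'2 hν hν' hr hr' hclose)

lemma expSum_fractMulInv (s : Finset ℕ) (α : ℕ → ℂ) (h d ν : ℕ) :
    expSum s α (fractMulInv h d ν) =
      ∑ n ∈ s, α n * eAdd (((ν * n * ((h : ZMod d)⁻¹).val : ℕ) : ℝ) / d) := by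
  refine sum_congr rfl fun n _ => ?_
  rw [fractMulInv, eAdd_natCast_mul_fract]
  push_cast
  ring_nf

theorem large_sieve_for_roots (h : ℕ) (hh : 1 ≤ h) (X : ℝ) (hX : 1 ≤ X)
    (N : ℕ) (hN : 1 ≤ N) (α : ℕ → ℂ) :
    ∑ d ∈ (Finset.Icc 1 ⌊2 * X⌋₊).filter (fun d : ℕ => X < (d : ℝ) ∧ Nat.gcd d h = 1),
      ∑ ν ∈ (Finset.range d).filter (fun ν => (ν ^ 2 + 1) % d = 0),
        ‖∑ n ∈ Finset.Icc 1 N,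
          α n * eAdd (((ν * n * ((h : ZMod d)⁻¹).val : ℕ) : ℝ) / d)‖ ^ 2
      ≤ 400 * ((h : ℝ) * X + N) * ∑ n ∈ Finset.Icc 1 N, ‖α n‖ ^ 2 := by
  set A := (Finset.Icc 1 ⌊2 * X⌋₊).filter (fun d : ℕ => X < (d : ℝ) ∧ Nat.gcd d h = 1)
  set B := fun d => (Finset.range d).filter (fun ν => (ν ^ 2 + 1) % d = 0)
  have hmem : ∀ p ∈ A.sigma B,
      X < p.1 ∧ (p.1 : ℝ) ≤ 2 * X ∧ h.Coprime p.1 ∧ p.2 < p.1 ∧ p.1 ∣ p.2 ^ 2 + 1 := by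
    rintro ⟨d, ν⟩ hp
    simp only [A, B, mem_sigma, mem_filter, mem_Icc, mem_range] at hp
    exact ⟨hp.1.2.1, (Nat.le_floor_iff (by linarith)).1 hp.1.1.2, Nat.coprime_comm.1 hp.1.2.2,
      hp.2.1, Nat.dvd_of_mod_eq_zero hp.2.2⟩
  have hsep : (A.sigma B : Set (Σ _ : ℕ, ℕ)).Pairwise fun p p' =>
      1 / (5 * h * X) ≤ |fractMulInv h p.1 p.2 - fractMulInv h p'.1 p'.2| := by
    rintro ⟨d, ν⟩ hp ⟨d', ν'⟩ hp' hne
    obtain ⟨hd, hd2, hhd, hν, hr⟩ := hmem _ hp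
    obtain ⟨hd', hd'2, hhd', hν', hr'⟩ := hmem _ hp'
    exact le_abs_fractMulInv_sub hh hd hd2 hd' hd'2 hhd hhd' hν hν' hr hr'
      (by rintro ⟨rfl, rfl⟩; exact hne rfl)
  have hδ1 : 1 / (5 * h * X) ≤ 1 := by
    rw [div_le_one (by positivity)]
    nlinarith [(Nat.one_le_cast (α := ℝ)).2 hh]
  simp_rw [← expSum_fractMulInv]
  rw [sum_sigma' A B (fun d ν => ‖expSum (Icc 1 N) α (fractMulInv h d ν)‖ ^ 2)]
  calc _ ≤ (2 / (1 / (5 * h * X)) + 8 * Real.pi * N) * ∑ n ∈ Icc 1 N, ‖α n‖ ^ 2 :=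
        sum_norm_sq_expSum_le_of_separated (fun _ _ => ⟨Int.fract_nonneg _, Int.fract_lt_one _⟩)
          (by positivity) hδ1 hsep (by positivity)
          (fun n hn => by exact_mod_cast (mem_Icc.1 hn).2) α
    _ ≤ 400 * ((h : ℝ) * X + N) * ∑ n ∈ Icc 1 N, ‖α n‖ ^ 2 := by
        gcongr
        rw [div_div_eq_mul_div, div_one]
        nlinarith [Real.pi_le_four]
end

section
/- Diagonal count: There is an absolute constant C such that for every x ≥ 2, every integer h with 1 ≤ h ≤ √x, and every odd squarefree integer m with 1 ≤ m ≤ √x, the number of pairs of integers (ℓ, b) with 0 < ℓ < √x, |b| < √x/(2h), gcd(ℓ, m) = 1, and ℓ² + 4h²b² ≡ 0 (mod m) is at most C·x·ρ(m)/(m·h). -/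
/-!
If `ℓ` is prime to `m` and `m ∣ ℓ² + (2hb)²`, then `ν = 2hb · ℓ⁻¹` is a square root of `-1`
modulo `m`, and `ℓ ≡ -2hbν (mod m)`. Hence the residue of `ℓ` is determined by the pair `(ν, b)`,
and `ℓ` itself by `(ν, b, ⌊ℓ/m⌋)`. This gives an injection of the pairs counted into a box with
`ρ(m) · (√x/m + 1) · (√x/h + 1) ≤ 4xρ(m)/(mh)` points.
-/

open Finset

/-- `ρ(m)`: the number of roots of `ν² + 1 ≡ 0 (mod m)`. -/
def rhoRoots (m : ℕ) : ℕ :=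
  ((Finset.range m).filter (fun ν => (ν ^ 2 + 1) % m = 0)).card

theorem rhoRoots_eq_card_sq_add_one_eq_zero (m : ℕ) [NeZero m] :
    rhoRoots m = #{ν : ZMod m | ν ^ 2 + 1 = 0} := by
  refine card_nbij' (fun n => (n : ZMod m)) ZMod.val ?_ ?_ ?_ ?_
  · intro n hn
    simp only [coe_filter, mem_range, Set.mem_ofPred_eq, mem_univ, true_and] at hn ⊢
    exact_mod_cast (ZMod.natCast_eq_zero_iff _ m).mpr (Nat.dvd_of_mod_eq_zero hn.2)
  · intro ν hν
    simp only [coe_filter, mem_univ, true_and, Set.mem_ofPred_eq, mem_range] at hν ⊢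
    refine ⟨ZMod.val_lt ν, Nat.mod_eq_zero_of_dvd ((ZMod.natCast_eq_zero_iff _ m).mp ?_)⟩
    simpa using hν
  · intro n hn
    simp only [coe_filter, mem_range, Set.mem_ofPred_eq] at hn
    exact ZMod.val_cast_of_lt hn.1
  · intro ν _
    exact ZMod.natCast_zmod_val ν

section SumOfSquares

variable {R : Type*} [CommRing R] {u : Rˣ} {c : R}

theorem Units.sq_mul_inv_add_one_eq_zero (h : (u : R) ^ 2 + c ^ 2 = 0) :
    (c * ↑u⁻¹) ^ 2 + 1 = 0 := by
  linear_combination (↑u⁻¹ : R) ^ 2 * h - (1 + (u : R) * ↑u⁻¹) * u.mul_inv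

theorem Units.eq_neg_mul_inv_mul_of_sq_add_sq_eq_zero (h : (u : R) ^ 2 + c ^ 2 = 0) :
    (u : R) = -(c * ↑u⁻¹) * c := by
  linear_combination (↑u⁻¹ : R) * h - (u : R) * u.mul_inv

end SumOfSquares

theorem ZMod.sq_mul_inv_add_one_eq_zero_of_dvd {m ℓ : ℕ} {c : ℤ} (hℓ : ℓ.Coprime m)
    (hdvd : (m : ℤ) ∣ ℓ ^ 2 + c ^ 2) :
    ((c : ZMod m) * (ℓ : ZMod m)⁻¹) ^ 2 + 1 = 0 ∧
      (ℓ : ZMod m) = -((c : ZMod m) * (ℓ : ZMod m)⁻¹) * c := by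
  set u := ZMod.unitOfCoprime ℓ hℓ
  have hu : (u : ZMod m) = ℓ := ZMod.coe_unitOfCoprime _ _
  have hsum : (u : ZMod m) ^ 2 + (c : ZMod m) ^ 2 = 0 := by
    rw [hu]
    exact_mod_cast (ZMod.intCast_zmod_eq_zero_iff_dvd _ m).mpr hdvd
  simp only [← hu, ZMod.inv_coe_unit]
  exact ⟨Units.sq_mul_inv_add_one_eq_zero hsum, Units.eq_neg_mul_inv_mul_of_sq_add_sq_eq_zero hsum⟩

theorem Nat.eq_of_natCast_eq_of_div_eq {m a b : ℕ} (hmod : (a : ZMod m) = b) (hdiv : a / m = b / m) :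
    a = b := by
  rw [← Nat.div_add_mod a m, ← Nat.div_add_mod b m, hdiv,
    (ZMod.natCast_eq_natCast_iff' a b m).mp hmod]

theorem card_le_of_residue_determined {m N B : ℕ} (S : Finset (ℕ × ℤ)) (R : Finset (ZMod m))
    (f : ℕ × ℤ → ZMod m) (g : ZMod m → ℤ → ZMod m)
    (hS : ∀ p ∈ S, p.1 ≤ N ∧ p.2.natAbs ≤ B ∧ f p ∈ R ∧ (p.1 : ZMod m) = g (f p) p.2) :
    #S ≤ #R * ((N / m + 1) * (2 * B + 1)) := by
  have hbox : #(R ×ˢ range (N / m + 1) ×ˢ Icc (-(B : ℤ)) B) = #R * ((N / m + 1) * (2 * B + 1)) := by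
    rw [card_product, card_product, card_range, Int.card_Icc]
    congr 2
    omega
  rw [← hbox]
  refine card_le_card_of_injOn (fun p => (f p, p.1 / m, p.2)) ?_ ?_
  · intro p hp
    obtain ⟨hN, hB, hR, -⟩ := hS p hp
    simp only [coe_product, Set.mem_prod, mem_coe, mem_range, mem_Icc]
    exact ⟨hR, Nat.lt_succ_of_le (Nat.div_le_div_right hN), by omega, by omega⟩
  · intro p hp q hq hpq
    simp only [Prod.mk.injEq] at hpq
    obtain ⟨hf, hdiv, hb⟩ := hpq
    have hmod : (p.1 : ZMod m) = q.1 := by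
      rw [(hS p hp).2.2.2, (hS q hq).2.2.2, hf, hb]
    exact Prod.ext (Nat.eq_of_natCast_eq_of_div_eq hmod hdiv) hb

theorem natCast_floor_div_add_one_le {s : ℝ} {m : ℕ} (hm : 1 ≤ m) (hms : (m : ℝ) ≤ s) :
    ((⌊s⌋₊ / m + 1 : ℕ) : ℝ) ≤ 2 * s / m := by
  have hm0 : (0 : ℝ) < m := by exact_mod_cast hm
  have hfloor : ((⌊s⌋₊ / m : ℕ) : ℝ) ≤ s / m :=
    Nat.cast_div_le.trans (div_le_div_of_nonneg_right (Nat.floor_le (hm0.le.trans hms)) hm0.le)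
  have hone : 1 ≤ s / m := (one_le_div hm0).mpr hms
  push_cast
  linarith [show 2 * s / m = s / m + s / m by ring]

theorem natCast_two_mul_floor_add_one_le {t : ℝ} (ht : 1 / 2 ≤ t) :
    ((2 * ⌊t⌋₊ + 1 : ℕ) : ℝ) ≤ 4 * t := by
  have := Nat.floor_le (show 0 ≤ t by linarith)
  push_cast
  linarith

open Classical in
theorem diagonal_count :
    ∃ C : ℝ, ∀ x : ℝ, 2 ≤ x → ∀ h : ℕ, 1 ≤ h → (h : ℝ) ≤ Real.sqrt x →
      ∀ m : ℕ, 1 ≤ m → Odd m → Squarefree m → (m : ℝ) ≤ Real.sqrt x →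
      ((((Finset.Icc 1 ⌊x⌋₊) ×ˢ (Finset.Icc (-(⌊x⌋₊ : ℤ)) (⌊x⌋₊ : ℤ))).filter
          (fun p : ℕ × ℤ =>
            (p.1 : ℝ) < Real.sqrt x ∧
            (|p.2| : ℝ) < Real.sqrt x / (2 * h) ∧
            Nat.gcd p.1 m = 1 ∧
            (m : ℤ) ∣ ((p.1 : ℤ) ^ 2 + 4 * (h : ℤ) ^ 2 * p.2 ^ 2))).card : ℝ)
        ≤ C * x * (rhoRoots m) / ((m : ℝ) * h) := by
  refine ⟨4, fun x hx h hh hhx m hm _ _ hmx => ?_⟩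
  have : NeZero m := ⟨by omega⟩
  set s := Real.sqrt x
  have hh0 : (0 : ℝ) < h := by exact_mod_cast hh
  refine (Nat.cast_le.mpr (card_le_of_residue_determined (N := ⌊s⌋₊) (B := ⌊s / (2 * h)⌋₊) _
    {ν : ZMod m | ν ^ 2 + 1 = 0} (fun p => ((2 * h * p.2 : ℤ) : ZMod m) * (p.1 : ZMod m)⁻¹)
    (fun ν b => -ν * ((2 * h * b : ℤ) : ZMod m)) ?_)).trans ?_
  · intro p hp
    simp only [mem_filter] at hp
    obtain ⟨-, hℓ, hb, hgcd, hdvd⟩ := hp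
    obtain ⟨hroot, hres⟩ := ZMod.sq_mul_inv_add_one_eq_zero_of_dvd (c := 2 * h * p.2) hgcd
      (by convert hdvd using 1; ring)
    refine ⟨Nat.le_floor hℓ.le, Nat.le_floor ?_, by simpa using hroot, hres⟩
    rw [Nat.cast_natAbs, Int.cast_abs]
    exact hb.le
  · have hB : 1 / 2 ≤ s / (2 * h) := by
      rw [le_div_iff₀ (by positivity)]
      linarith
    rw [← rhoRoots_eq_card_sq_add_one_eq_zero, Nat.cast_mul, Nat.cast_mul]
    calc (rhoRoots m : ℝ) * (((⌊s⌋₊ / m + 1 : ℕ) : ℝ) * ((2 * ⌊s / (2 * h)⌋₊ + 1 : ℕ) : ℝ))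
        ≤ rhoRoots m * (2 * s / m * (4 * (s / (2 * h)))) := by
          gcongr
          exacts [natCast_floor_div_add_one_le hm hmx, natCast_two_mul_floor_add_one_le hB]
      _ = 4 * x * rhoRoots m / (m * h) := by
          rw [← show s ^ 2 = x from Real.sq_sqrt (by linarith)]
          field_simp
end
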